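/- arXiv:1701.06381 — 2 statements merged into one kernel-verified Lean document; each statement's English description precedes it below -/
import Mathlib

section
/- For α < 0 and 0 < Δ ≤ 1/k, the supremum of ∑_{i=1}^k p_i^α over probability vectors with p_i ≥ Δ for all i equals (1-(k-1)Δ)^α + (k-1)Δ^α, and this is at most k·Δ^α. -/
/-!
Every admissible `p` has its entries in `[Δ, b]` with `b = 1 - (k - 1) Δ`. On that interval the
convex function `x ↦ x ^ α` lies below its chord, which is affine, so summing the chord bound over
the entries gives a quantity fixed by `∑ pᵢ = 1`: the value at the extreme vector `(b, Δ, …, Δ)`.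
-/

open Real Finset

theorem convexOn_rpow_of_nonpos {p : ℝ} (hp : p ≤ 0) :
    ConvexOn ℝ (Set.Ioi 0) fun x : ℝ => x ^ p := by
  have hlog : ConvexOn ℝ (Set.Ioi 0) fun x => p * log x :=
    (strictConcaveOn_log_Ioi.concaveOn.smul (neg_nonneg.2 hp)).neg.congr fun x _ => by simp
  have himage : Convex ℝ ((fun x => p * log x) '' Set.Ioi 0) :=
    Real.convex_iff_isPreconnected.2 <| isPreconnected_Ioi.image _ <|
      continuousOn_const.mul <| continuousOn_log.mono fun x hx => (Set.mem_Ioi.1 hx).ne'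
  refine ((convexOn_exp.subset (Set.subset_univ _) himage).comp hlog
    (exp_monotone.monotoneOn _)).congr fun x hx => ?_
  simp [rpow_def_of_pos (Set.mem_Ioi.1 hx), mul_comm]

theorem ConvexOn.sub_mul_le_of_mem_Icc {s : Set ℝ} {f : ℝ → ℝ} (hf : ConvexOn ℝ s f)
    {a b x : ℝ} (ha : a ∈ s) (hb : b ∈ s) (hx : x ∈ Set.Icc a b) :
    (b - a) * f x ≤ (b - x) * f a + (x - a) * f b := by
  rcases hx.1.eq_or_lt with rfl | hax
  · simp
  rcases hx.2.eq_or_lt with rfl | hxb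
  · simp
  exact hf.secant_mono_aux1 ha hb hax hxb

theorem ConvexOn.sum_le_of_mem_Icc_of_sum_eq {ι : Type*} [Fintype ι] {f : ℝ → ℝ} {a b : ℝ}
    (hf : ConvexOn ℝ (Set.Icc a b) f) (hab : a ≤ b) {x : ι → ℝ} (hx : ∀ i, x i ∈ Set.Icc a b)
    (hsum : ∑ i, x i = (Fintype.card ι - 1) * a + b) :
    ∑ i, f (x i) ≤ f b + (Fintype.card ι - 1) * f a := by
  rcases hab.eq_or_lt with rfl | hab
  · have hxa : ∀ i, x i = a := fun i => le_antisymm (hx i).2 (hx i).1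
    simp only [hxa, sum_const, card_univ, nsmul_eq_mul]
    linarith
  have hchord (i : ι) := hf.sub_mul_le_of_mem_Icc (Set.left_mem_Icc.2 hab.le)
    (Set.right_mem_Icc.2 hab.le) (hx i)
  refine le_of_mul_le_mul_left ?_ (sub_pos.2 hab)
  calc (b - a) * ∑ i, f (x i) = ∑ i, (b - a) * f (x i) := mul_sum _ _ _
    _ ≤ ∑ i, ((b - x i) * f a + (x i - a) * f b) := sum_le_sum fun i _ => hchord i
    _ = (Fintype.card ι * b - ∑ i, x i) * f a + (∑ i, x i - Fintype.card ι * a) * f b := by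
      simp only [sum_add_distrib, ← sum_mul, sum_sub_distrib, sum_const, card_univ, nsmul_eq_mul]
    _ = (b - a) * (f b + (Fintype.card ι - 1) * f a) := by rw [hsum]; ring

theorem le_sub_mul_of_forall_le_of_sum_eq {ι : Type*} [Fintype ι] {p : ι → ℝ} {Δ s : ℝ}
    (hp : ∀ i, Δ ≤ p i) (hsum : ∑ i, p i = s) (j : ι) :
    p j ≤ s - (Fintype.card ι - 1) * Δ := by
  have hj : p j - Δ ≤ ∑ i, (p i - Δ) :=
    single_le_sum (fun i _ => sub_nonneg.2 (hp i)) (mem_univ j)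
  rw [sum_sub_distrib, hsum, sum_const, card_univ, nsmul_eq_mul] at hj
  linarith

theorem sum_comp_update_const {ι : Type*} [Fintype ι] [DecidableEq ι] (g : ℝ → ℝ) (a b : ℝ)
    (j : ι) : ∑ i, g (Function.update (fun _ => a) j b i) = g b + (Fintype.card ι - 1) * g a := by
  rw [← add_sum_erase _ _ (mem_univ j)]
  have hrest : ∀ i ∈ univ.erase j, g (Function.update (fun _ => a) j b i) = g a :=
    fun i hi => by rw [Function.update_of_ne (ne_of_mem_erase hi)]
  rw [sum_congr rfl hrest, sum_const, card_erase_of_mem (mem_univ j), card_univ, nsmul_eq_mul,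
    Nat.cast_pred (Fintype.card_pos_iff.2 ⟨j⟩), Function.update_self]

/-- For `α < 0` and `0 < Δ ≤ 1/k`, the supremum of `∑ i, (p i) ^ α` over probability
vectors with all entries at least `Δ` equals `(1-(k-1)Δ)^α + (k-1)Δ^α ≤ k Δ^α`. -/
theorem sup_sum_rpow_prob_vector_truncated (k : ℕ) (hk : 0 < k) (α : ℝ) (hα : α < 0)
    (Δ : ℝ) (hΔ : 0 < Δ) (hΔk : Δ ≤ 1 / k) :
    IsGreatest {x : ℝ | ∃ p : Fin k → ℝ, (∀ i, Δ ≤ p i) ∧ (∑ i, p i) = 1 ∧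
        x = ∑ i, (p i) ^ α}
      ((1 - ((k : ℝ) - 1) * Δ) ^ α + ((k : ℝ) - 1) * Δ ^ α) ∧
    (1 - ((k : ℝ) - 1) * Δ) ^ α + ((k : ℝ) - 1) * Δ ^ α ≤ (k : ℝ) * Δ ^ α := by
  have hkΔ : Δ * k ≤ 1 := by rwa [le_div_iff₀ (by positivity)] at hΔk
  set b := 1 - ((k : ℝ) - 1) * Δ with hb
  have hΔb : Δ ≤ b := by linarith
  have hbα : b ^ α ≤ Δ ^ α := rpow_le_rpow_of_nonpos hΔ hΔb hα.le
  have hcard : (Fintype.card (Fin k) : ℝ) = k := by simp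
  obtain ⟨i₀⟩ : Nonempty (Fin k) := ⟨⟨0, hk⟩⟩
  refine ⟨⟨?_, ?_⟩, by linarith⟩
  · refine ⟨Function.update (fun _ => Δ) i₀ b, ?_, ?_, ?_⟩
    · exact (Function.forall_update_iff _ fun _ => (Δ ≤ ·)).2 ⟨hΔb, fun _ _ => le_rfl⟩
    · refine (sum_comp_update_const id Δ b i₀).trans ?_
      rw [hcard, id, id, hb]
      ring
    · rw [sum_comp_update_const (· ^ α), hcard]
  · rintro _ ⟨p, hp, hsum, rfl⟩
    have hf : ConvexOn ℝ (Set.Icc Δ b) (· ^ α) := (convexOn_rpow_of_nonpos hα.le).subset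
      ((Set.Icc_subset_Ioi_iff hΔb).2 hΔ) (convex_Icc _ _)
    have hp_le (i : Fin k) : p i ≤ b := by
      simpa [hcard] using le_sub_mul_of_forall_le_of_sum_eq hp hsum i
    simpa [hcard] using hf.sum_le_of_mem_Icc_of_sum_eq hΔb (fun i => ⟨hp i, hp_le i⟩)
      (by rw [hsum, hcard]; ring)
end

section
/- Let φ:(0,1] → ℝ satisfy |φ'(p)| ≤ W p^{α−1} + c₁ on (0,1] with W > 0, c₁ ∈ ℝ, α ∈ (0,1/2]. Define φ_Δ(x) = φ(Δ x²) on (0,1] for Δ ∈ (0,1]. Then for all x, y ∈ [0,1] (with φ_Δ extended continuously to 0), |φ_Δ(x) − φ_Δ(y)| ≤ (Δ^α (W + |c₁|)/α)·|y − x|^{2α}, i.e., the modulus of continuity satisfies ω(φ_Δ, δ) ≤ (Δ^α (W + |c₁|)/α)·δ^{2α}. -/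
/-!
Write `K = Δ^α (W + |c₁|) / α`. Since `p^(α-1) ≥ 1` on `(0,1]`, the bound on `φ'` gives
`|φ'(p)| ≤ (W + |c₁|) p^(α-1)`, and with `p = Δ t²` the chain rule yields
`|d/dt φ(Δ t²)| ≤ 2 Δ^α (W + |c₁|) t^(2α-1) = K (t^(2α))'`. Hence `K t^(2α) ± φ(Δ t²)` are both
nondecreasing on `[0,1]`, so `|φ(Δ y²) - φ(Δ x²)| ≤ K (y^(2α) - x^(2α)) ≤ K (y - x)^(2α)` for
`x ≤ y`, the last step by subadditivity of `t ↦ t^(2α)` for `2α ≤ 1`.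
-/

open Real Set

theorem abs_sub_le_sub_of_abs_deriv_le {f g f' g' : ℝ → ℝ} {a b : ℝ}
    (hf : ContinuousOn f (Icc a b)) (hg : ContinuousOn g (Icc a b))
    (hf' : ∀ t ∈ Ioo a b, HasDerivAt f (f' t) t) (hg' : ∀ t ∈ Ioo a b, HasDerivAt g (g' t) t)
    (hle : ∀ t ∈ Ioo a b, |f' t| ≤ g' t) {x y : ℝ} (hx : x ∈ Icc a b) (hy : y ∈ Icc a b)
    (hxy : x ≤ y) :
    |f y - f x| ≤ g y - g x := by
  have hsub : MonotoneOn (g - f) (Icc a b) := by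
    refine monotoneOn_of_hasDerivWithinAt_nonneg (convex_Icc a b) (hg.sub hf) (f' := g' - f')
      ?_ ?_ <;> rw [interior_Icc] <;> intro t ht
    exacts [((hg' t ht).sub (hf' t ht)).hasDerivWithinAt,
      by rw [Pi.sub_apply]; linarith [le_abs_self (f' t), hle t ht]]
  have hadd : MonotoneOn (g + f) (Icc a b) := by
    refine monotoneOn_of_hasDerivWithinAt_nonneg (convex_Icc a b) (hg.add hf) (f' := g' + f')
      ?_ ?_ <;> rw [interior_Icc] <;> intro t ht
    exacts [((hg' t ht).add (hf' t ht)).hasDerivWithinAt,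
      by rw [Pi.add_apply]; linarith [neg_abs_le (f' t), hle t ht]]
  have h₁ := hsub hx hy hxy
  have h₂ := hadd hx hy hxy
  simp only [Pi.sub_apply, Pi.add_apply] at h₁ h₂
  rw [abs_sub_le_iff]
  constructor <;> linarith

theorem abs_sub_le_mul_abs_sub_rpow_of_abs_deriv_le {f f' : ℝ → ℝ} {b K β : ℝ} (hK : 0 ≤ K)
    (hβ0 : 0 < β) (hβ1 : β ≤ 1) (hf : ContinuousOn f (Icc 0 b))
    (hf' : ∀ t ∈ Ioo 0 b, HasDerivAt f (f' t) t)
    (hle : ∀ t ∈ Ioo 0 b, |f' t| ≤ K * (β * t ^ (β - 1))) :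
    ∀ x ∈ Icc 0 b, ∀ y ∈ Icc 0 b, |f x - f y| ≤ K * |y - x| ^ β := by
  suffices h : ∀ x ∈ Icc 0 b, ∀ y ∈ Icc 0 b, x ≤ y → |f y - f x| ≤ K * (y - x) ^ β by
    intro x hx y hy
    rcases le_total x y with hxy | hyx
    · rw [abs_sub_comm, abs_of_nonneg (sub_nonneg.2 hxy)]
      exact h x hx y hy hxy
    · rw [abs_sub_comm y, abs_of_nonneg (sub_nonneg.2 hyx)]
      exact h y hy x hx hyx
  intro x hx y hy hxy
  have hpow : y ^ β ≤ (y - x) ^ β + x ^ β := by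
    simpa using rpow_add_le_add_rpow (sub_nonneg.2 hxy) hx.1 hβ0.le hβ1
  calc |f y - f x| ≤ K * y ^ β - K * x ^ β :=
        abs_sub_le_sub_of_abs_deriv_le (g := fun t ↦ K * t ^ β) hf
          (continuous_const.mul (continuous_rpow_const hβ0.le)).continuousOn hf'
          (fun t ht ↦ (hasDerivAt_rpow_const (Or.inl ht.1.ne')).const_mul K) hle hx hy hxy
    _ ≤ K * (y - x) ^ β := by rw [← mul_sub]; gcongr; linarith

theorem add_le_add_abs_mul_rpow_sub_one {W c p α : ℝ} (hp0 : 0 < p) (hp1 : p ≤ 1) (hα : α ≤ 1) :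
    W * p ^ (α - 1) + c ≤ (W + |c|) * p ^ (α - 1) := by
  have h1 : 1 ≤ p ^ (α - 1) := one_le_rpow_of_pos_of_le_one_of_nonpos hp0 hp1 (by linarith)
  rw [add_mul]
  gcongr
  exact (le_abs_self c).trans (le_mul_of_one_le_right (abs_nonneg c) h1)

theorem mul_sq_rpow_sub_one_mul {Δ t : ℝ} (α : ℝ) (hΔ : 0 < Δ) (ht : 0 < t) :
    (Δ * t ^ 2) ^ (α - 1) * (Δ * t) = Δ ^ α * t ^ (2 * α - 1) := by
  have hΔα : Δ ^ α = Δ ^ (α - 1) * Δ := by rw [← rpow_add_one hΔ.ne']; ring_nf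
  have htα : t ^ (2 * α - 1) = (t ^ 2) ^ (α - 1) * t := by
    rw [← rpow_natCast, ← rpow_mul ht.le, ← rpow_add_one ht.ne']; ring_nf
  rw [mul_rpow hΔ.le (by positivity), hΔα, htα]
  ring

theorem abs_mul_deriv_mul_sq_le {d W c α Δ t : ℝ} (hα0 : 0 < α) (hα1 : α ≤ 1) (hΔ : 0 < Δ)
    (ht : 0 < t) (hp : Δ * t ^ 2 ≤ 1) (hd : |d| ≤ W * (Δ * t ^ 2) ^ (α - 1) + c) :
    |d * (Δ * (2 * t))| ≤ Δ ^ α * (W + |c|) / α * (2 * α * t ^ (2 * α - 1)) :=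
  calc |d * (Δ * (2 * t))| = |d| * (2 * (Δ * t)) := by
        rw [abs_mul, abs_of_pos (show 0 < Δ * (2 * t) by positivity)]; ring
    _ ≤ (W + |c|) * (Δ * t ^ 2) ^ (α - 1) * (2 * (Δ * t)) := by
        gcongr
        exact hd.trans (add_le_add_abs_mul_rpow_sub_one (by positivity) hp hα1)
    _ = 2 * (W + |c|) * (Δ ^ α * t ^ (2 * α - 1)) := by
        rw [← mul_sq_rpow_sub_one_mul α hΔ ht]; ring
    _ = Δ ^ α * (W + |c|) / α * (2 * α * t ^ (2 * α - 1)) := by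
        field_simp

theorem modulus_of_continuity_sq_scaled_general (φ : ℝ → ℝ) (W c₁ α : ℝ)
    (hα0 : 0 < α) (hα : α ≤ 1 / 2)
    (hdiff : ∀ p ∈ Ioc (0 : ℝ) 1, DifferentiableAt ℝ φ p)
    (hcont : ContinuousOn φ (Icc (0 : ℝ) 1))
    (hbound : ∀ p ∈ Ioc (0 : ℝ) 1, |deriv φ p| ≤ W * p ^ (α - 1) + c₁)
    (Δ : ℝ) (hΔ : Δ ∈ Ioc (0 : ℝ) 1) :
    ∀ x ∈ Icc (0 : ℝ) 1, ∀ y ∈ Icc (0 : ℝ) 1,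
      |φ (Δ * x ^ 2) - φ (Δ * y ^ 2)| ≤
        Δ ^ α * (W + |c₁|) / α * |y - x| ^ (2 * α) := by
  obtain ⟨hΔ0, hΔ1⟩ := hΔ
  have hWc : 0 ≤ W + |c₁| :=
    (abs_nonneg _).trans ((hbound 1 ⟨one_pos, le_rfl⟩).trans (by simpa using le_abs_self c₁))
  have hsq : ∀ t ∈ Icc (0 : ℝ) 1, Δ * t ^ 2 ∈ Icc (0 : ℝ) 1 := fun t ht ↦
    ⟨by positivity, mul_le_one₀ hΔ1 (by positivity) (pow_le_one₀ ht.1 ht.2)⟩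
  have hsq_pos : ∀ t ∈ Ioo (0 : ℝ) 1, Δ * t ^ 2 ∈ Ioc (0 : ℝ) 1 := fun t ht ↦
    ⟨by have := ht.1; positivity, (hsq t (Ioo_subset_Icc_self ht)).2⟩
  have hderiv : ∀ t ∈ Ioo (0 : ℝ) 1,
      HasDerivAt (fun t ↦ φ (Δ * t ^ 2)) (deriv φ (Δ * t ^ 2) * (Δ * (2 * t))) t :=
    fun t ht ↦ (hdiff _ (hsq_pos t ht)).hasDerivAt.comp t
      (by simpa using (hasDerivAt_pow 2 t).const_mul Δ)
  exact abs_sub_le_mul_abs_sub_rpow_of_abs_deriv_le (by positivity) (by positivity)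
    (by linarith) (hcont.comp (by fun_prop) hsq) hderiv fun t ht ↦
      abs_mul_deriv_mul_sq_le hα0 (by linarith) hΔ0 ht.1 (hsq_pos t ht).2
        (hbound _ (hsq_pos t ht))

/-- If `|φ'(p)| ≤ W p^(α-1) + c₁` on `(0,1]` with `α ∈ (0,1/2]`, then
`φ_Δ(x) = φ(Δ x²)` satisfies `|φ_Δ(x) - φ_Δ(y)| ≤ (Δ^α (W + |c₁|)/α) |y - x|^(2α)`
on `[0,1]`, i.e. its modulus of continuity is bounded by `(Δ^α (W + |c₁|)/α) δ^(2α)`. -/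
theorem modulus_of_continuity_sq_scaled (φ : ℝ → ℝ) (W c₁ α : ℝ) (hW : 0 < W)
    (hα0 : 0 < α) (hα : α ≤ 1 / 2)
    (hdiff : ∀ p ∈ Ioc (0 : ℝ) 1, DifferentiableAt ℝ φ p)
    (hderiv_cont : ContinuousOn (deriv φ) (Ioc (0 : ℝ) 1))
    (hcont : ContinuousOn φ (Icc (0 : ℝ) 1))
    (hbound : ∀ p ∈ Ioc (0 : ℝ) 1, |deriv φ p| ≤ W * p ^ (α - 1) + c₁)
    (Δ : ℝ) (hΔ : Δ ∈ Ioc (0 : ℝ) 1) :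
    ∀ x ∈ Icc (0 : ℝ) 1, ∀ y ∈ Icc (0 : ℝ) 1,
      |φ (Δ * x ^ 2) - φ (Δ * y ^ 2)| ≤
        Δ ^ α * (W + |c₁|) / α * |y - x| ^ (2 * α) :=
  modulus_of_continuity_sq_scaled_general φ W c₁ α hα0 hα hdiff hcont hbound Δ hΔ
end
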